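/- Let Q be a real symmetric n×n matrix all of whose row sums are zero, and let y, w ∈ {1,…,n} be indices such that the principal submatrices Q_y and Q_w are invertible; let L_y and L_w be the corresponding padded inverses. Then for all indices x, z ∈ {1,…,n}: (L_y)_{xz} − (L_y)_{xw} = (L_w)_{xz} − (L_w)_{yz}. In terms of potential kernels this reads j_y(x,z) − j_y(x,w) = j_w(x,z) − j_w(y,z), the reciprocity theorem for electrical networks. (Paper: Example 6.3.) -/

import Mathlib

open Matrix

/-!
Write `𝟙` for the all-ones vector and `e_q` for the `q`-th basis vector. Since `Q` is inverted
away from `q`, the product `L_q Q` agrees with the identity off the `q`-th column, and zero row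
sums of `Q` pin down that column: `L_y Q = 1 - 𝟙 e_yᵀ`. Symmetrically `Q L_w = 1 - e_w 𝟙ᵀ`.
Expanding `L_y Q L_w` both ways gives `L_y - (L_y e_w) 𝟙ᵀ = L_w - 𝟙 (e_yᵀ L_w)`, which is the
reciprocity identity entrywise.
-/

variable {R : Type*} [CommRing R] {n : ℕ}

structure IsPaddedInverse (Q L : Matrix (Fin (n + 1)) (Fin (n + 1)) R) (q : Fin (n + 1)) :
    Prop where
  submatrix_eq : ∀ i j : Fin n,
    L (q.succAbove i) (q.succAbove j) = (Q.submatrix q.succAbove q.succAbove)⁻¹ i j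
  row_eq_zero : ∀ j, L q j = 0
  col_eq_zero : ∀ i, L i q = 0

namespace IsPaddedInverse

variable {Q L : Matrix (Fin (n + 1)) (Fin (n + 1)) R} {q : Fin (n + 1)}

theorem transpose (hL : IsPaddedInverse Q L q) : IsPaddedInverse Qᵀ Lᵀ q where
  submatrix_eq i j := by
    rw [← transpose_submatrix, ← transpose_nonsing_inv]
    exact hL.submatrix_eq j i
  row_eq_zero := hL.col_eq_zero
  col_eq_zero := hL.row_eq_zero

theorem mul_apply_succAbove (hinv : IsUnit (Q.submatrix q.succAbove q.succAbove).det)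
    (hL : IsPaddedInverse Q L q) (i : Fin (n + 1)) (j : Fin n) :
    (L * Q) i (q.succAbove j) = (1 : Matrix (Fin (n + 1)) (Fin (n + 1)) R) i (q.succAbove j) := by
  rcases eq_or_ne i q with rfl | hi
  · simp [mul_apply, hL.row_eq_zero]
  obtain ⟨a, rfl⟩ := Fin.exists_succAbove_eq hi
  rw [mul_apply, Fin.sum_univ_succAbove _ q, hL.col_eq_zero, zero_mul, zero_add]
  simp_rw [hL.submatrix_eq]
  change ((Q.submatrix q.succAbove q.succAbove)⁻¹ * Q.submatrix q.succAbove q.succAbove) a j = _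
  rw [nonsing_inv_mul _ hinv, ← submatrix_one _ Fin.succAbove_right_injective, submatrix_apply]

theorem mul_eq_one_sub (hinv : IsUnit (Q.submatrix q.succAbove q.succAbove).det)
    (hrow : Q *ᵥ 1 = 0) (hL : IsPaddedInverse Q L q) : L * Q = 1 - vecMulVec 1 (Pi.single q 1) := by
  set N : Matrix (Fin (n + 1)) (Fin (n + 1)) R := 1 - vecMulVec 1 (Pi.single q 1)
  have hN : ∀ i (j : Fin n), N i (q.succAbove j) = (1 : Matrix _ _ R) i (q.succAbove j) := by
    simp [N, Fin.succAbove_ne]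
  ext i j
  rcases eq_or_ne j q with rfl | hj
  · -- both matrices have zero row sums and agree off column `j`
    have hLQ : ∑ c, (L * Q) i c = 0 := by
      have : (L * Q) *ᵥ 1 = 0 := by rw [← mulVec_mulVec, hrow, mulVec_zero]
      simpa [mulVec, dotProduct] using congrFun this i
    have hN1 : ∑ c, N i c = 0 := by
      simp [N, Finset.sum_sub_distrib, one_apply]
    rw [Fin.sum_univ_succAbove _ j] at hLQ hN1
    simp_rw [hL.mul_apply_succAbove hinv, ← hN] at hLQ
    exact add_right_cancel (hLQ.trans hN1.symm)
  · obtain ⟨c, rfl⟩ := Fin.exists_succAbove_eq hj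
    rw [hL.mul_apply_succAbove hinv, hN]

theorem mul_eq_one_sub' (hinv : IsUnit (Q.submatrix q.succAbove q.succAbove).det)
    (hcol : 1 ᵥ* Q = 0) (hL : IsPaddedInverse Q L q) : Q * L = 1 - vecMulVec (Pi.single q 1) 1 := by
  have hinvT : IsUnit (Qᵀ.submatrix q.succAbove q.succAbove).det := by
    rwa [← transpose_submatrix, det_transpose]
  have := hL.transpose.mul_eq_one_sub hinvT (by rwa [mulVec_transpose])
  rw [← transpose_mul, ← transpose_one, ← transpose_vecMulVec, ← transpose_sub] at this
  exact transpose_injective this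

end IsPaddedInverse

/-- **Example 6.3 (reciprocity theorem).** Let `Q` be a real symmetric matrix with zero row
sums, and let `y`, `w` be indices whose principal submatrices `Q_y`, `Q_w` are invertible,
with padded inverses `L_y`, `L_w`. Then for all indices `x, z`:
`(L_y)_{xz} - (L_y)_{xw} = (L_w)_{xz} - (L_w)_{yz}`, i.e.
`j_y(x,z) - j_y(x,w) = j_w(x,z) - j_w(y,z)`. -/
theorem reciprocity_theorem
    {n : ℕ} (Q : Matrix (Fin (n + 1)) (Fin (n + 1)) ℝ)
    (hQsymm : Q.IsSymm)
    (hrow : ∀ i, ∑ j, Q i j = 0)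
    (y w : Fin (n + 1))
    (hinvy : IsUnit (Q.submatrix y.succAbove y.succAbove).det)
    (hinvw : IsUnit (Q.submatrix w.succAbove w.succAbove).det)
    (Ly : Matrix (Fin (n + 1)) (Fin (n + 1)) ℝ)
    (hpady : ∀ i j : Fin n,
      Ly (y.succAbove i) (y.succAbove j) = (Q.submatrix y.succAbove y.succAbove)⁻¹ i j)
    (hrow0y : ∀ j, Ly y j = 0) (hcol0y : ∀ i, Ly i y = 0)
    (Lw : Matrix (Fin (n + 1)) (Fin (n + 1)) ℝ)
    (hpadw : ∀ i j : Fin n,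
      Lw (w.succAbove i) (w.succAbove j) = (Q.submatrix w.succAbove w.succAbove)⁻¹ i j)
    (hrow0w : ∀ j, Lw w j = 0) (hcol0w : ∀ i, Lw i w = 0)
    (x z : Fin (n + 1)) :
    Ly x z - Ly x w = Lw x z - Lw y z := by
  have hrow' : Q *ᵥ 1 = 0 := funext fun i => by simpa [mulVec, dotProduct] using hrow i
  have hcol : 1 ᵥ* Q = 0 := by rw [← mulVec_transpose, hQsymm.eq, hrow']
  have hLyQ := IsPaddedInverse.mul_eq_one_sub hinvy hrow' ⟨hpady, hrow0y, hcol0y⟩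
  have hQLw := IsPaddedInverse.mul_eq_one_sub' hinvw hcol ⟨hpadw, hrow0w, hcol0w⟩
  calc Ly x z - Ly x w = (Ly * (Q * Lw)) x z := by
        rw [hQLw, Matrix.mul_sub, Matrix.mul_one, mul_vecMulVec, mulVec_single_one]
        simp
    _ = (Ly * Q * Lw) x z := by rw [Matrix.mul_assoc]
    _ = Lw x z - Lw y z := by
        rw [hLyQ, Matrix.sub_mul, Matrix.one_mul, vecMulVec_mul, single_one_vecMul]
        simp
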